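/- arXiv:1312.2305 — 5 statements merged into one kernel-verified Lean document; each statement's English description precedes it below -/
import Mathlib

section
/- Let 0 < ε < 1/2 and let (r_i) be positive reals with 1/ε ≤ r_1 and r_i ≤ ε·r_{i+1}. Define for each i the 5×5 matrix N_i with rows: (0, (2r_i−1)/(2r_{i+1}), r_i/r_{i+1}, 0, 0), (0, r_i/r_{i+1}, (2r_i+1)/(2r_{i+1}), 0, 0), (0, 0, 0, (2r_{i+1}−1)/(2r_{i+1}), 1), (0, 0, 0, 1, (2r_{i+1}+1)/(2r_{i+1})), (1/(2r_{i+1}), 0, 0, 0, 0). Then for any nonnegative row vector x = (x_1,...,x_5) and any i ≥ 1, the row vector x·N_i satisfies the entrywise bound x·N_i ≤ (ε^{i+1}x_5, ε(x_1+x_2), ε(x_1+x_2)+ε^{i+1}x_2, x_3+x_4, (x_3+x_4)(1+ε^{i+1})). -/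
open Matrix

/-- The matrix `N i` from the paper, built from the sequence `(r i)`. -/
noncomputable def Nmat (r : ℕ → ℝ) (i : ℕ) : Matrix (Fin 5) (Fin 5) ℝ :=
  !![0, (2 * r i - 1) / (2 * r (i + 1)), r i / r (i + 1), 0, 0;
     0, r i / r (i + 1), (2 * r i + 1) / (2 * r (i + 1)), 0, 0;
     0, 0, 0, (2 * r (i + 1) - 1) / (2 * r (i + 1)), 1;
     0, 0, 0, 1, (2 * r (i + 1) + 1) / (2 * r (i + 1));
     1 / (2 * r (i + 1)), 0, 0, 0, 0]

/-- The product `N j * N (j+2) * ⋯ * N (j+2ℓ)`. -/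
noncomputable def prodN (r : ℕ → ℝ) (j ℓ : ℕ) : Matrix (Fin 5) (Fin 5) ℝ :=
  ((List.range (ℓ + 1)).map (fun t => Nmat r (j + 2 * t))).prod

lemma key_lemma (ε : ℝ) (hε0 : 0 < ε) (r : ℕ → ℝ) (hrpos : ∀ i, 1 ≤ i → 0 < r i)
    (hr1 : 1 / ε ≤ r 1) (hstep : ∀ i, 1 ≤ i → r i ≤ ε * r (i + 1)) :
    ∀ i, 1 ≤ i → 1 ≤ ε ^ i * r i := by
  intro i hi
  induction i with
  | zero => omega
  | succ n ih =>
    rcases Nat.eq_or_lt_of_le hi with h | h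
    · have : n = 0 := by omega
      subst this
      have := (div_le_iff₀ hε0).mp hr1
      calc (1:ℝ) ≤ r 1 * ε := this
        _ = ε ^ 1 * r 1 := by ring
    · have hn : 1 ≤ n := by omega
      have h1 := ih hn
      have h2 := hstep n hn
      calc (1:ℝ) ≤ ε ^ n * r n := h1
        _ ≤ ε ^ n * (ε * r (n + 1)) := by
            exact mul_le_mul_of_nonneg_left h2 (by positivity)
        _ = ε ^ (n + 1) * r (n + 1) := by ring

set_option maxHeartbeats 1000000 in
/-- entrywise upper bound for `x · N i`. -/
theorem stmt1 (ε : ℝ) (hε0 : 0 < ε) (hε : ε < 1 / 2)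
    (r : ℕ → ℝ) (hrpos : ∀ i, 1 ≤ i → 0 < r i)
    (hr1 : 1 / ε ≤ r 1) (hstep : ∀ i, 1 ≤ i → r i ≤ ε * r (i + 1))
    (x : Fin 5 → ℝ) (hx : ∀ s, 0 ≤ x s) (i : ℕ) (hi : 1 ≤ i) :
    ∀ t, Matrix.vecMul x (Nmat r i) t ≤
      ![ε ^ (i + 1) * x 4, ε * (x 0 + x 1), ε * (x 0 + x 1) + ε ^ (i + 1) * x 1,
        x 2 + x 3, (x 2 + x 3) * (1 + ε ^ (i + 1))] t := by
  have hRi : 0 < r i := hrpos i hi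
  have hR : 0 < r (i + 1) := hrpos (i + 1) (by omega)
  have hkey : 1 ≤ ε ^ (i + 1) * r (i + 1) :=
    key_lemma ε hε0 r hrpos hr1 hstep (i + 1) (by omega)
  have hq : r i ≤ ε * r (i + 1) := hstep i hi
  have hεp : 0 < ε ^ (i + 1) := by positivity
  -- scalar bounds
  have h0 : 1 / (2 * r (i + 1)) ≤ ε ^ (i + 1) := by
    rw [div_le_iff₀ (by positivity)]; nlinarith
  have hB : r i / r (i + 1) ≤ ε := by
    rw [div_le_iff₀ hR]; linarith
  have hA : (2 * r i - 1) / (2 * r (i + 1)) ≤ ε := by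
    rw [div_le_iff₀ (by positivity)]; nlinarith
  have hC : (2 * r i + 1) / (2 * r (i + 1)) ≤ ε + ε ^ (i + 1) := by
    rw [div_le_iff₀ (by positivity)]; nlinarith
  have hD : (2 * r (i + 1) - 1) / (2 * r (i + 1)) ≤ 1 := by
    rw [div_le_iff₀ (by positivity)]; nlinarith
  have hE : (2 * r (i + 1) + 1) / (2 * r (i + 1)) ≤ 1 + ε ^ (i + 1) := by
    rw [div_le_iff₀ (by positivity)]; nlinarith
  have hx0 := hx 0; have hx1 := hx 1; have hx2 := hx 2; have hx3 := hx 3; have hx4 := hx 4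
  have h0' : (r (i + 1))⁻¹ * 2⁻¹ ≤ ε ^ (i + 1) := by
    have : (r (i + 1))⁻¹ * 2⁻¹ = 1 / (2 * r (i + 1)) := by
      field_simp
    linarith [h0, this.le, this.ge]
  intro t
  fin_cases t <;>
    simp [Matrix.vecMul, Nmat, dotProduct, Fin.sum_univ_five, Matrix.vecHead,
      Matrix.vecTail]
  · nlinarith [mul_le_mul_of_nonneg_left h0' hx4]
  · nlinarith [mul_le_mul_of_nonneg_left hA hx0, mul_le_mul_of_nonneg_left hB hx1]
  · nlinarith [mul_le_mul_of_nonneg_left hB hx0, mul_le_mul_of_nonneg_left hC hx1]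
  · nlinarith [mul_le_mul_of_nonneg_left hD hx2]
  · nlinarith [mul_le_mul_of_nonneg_left hE hx3]
end

section
/- With ε, (r_i), and N_i as above, fix an integer J > 0 such that δ := 2ε + ε^J < 1. Then for any nonnegative row vector x, all j ≥ J and ℓ ≥ 0, the product x·N_j·N_{j+2}·...·N_{j+2ℓ} is entrywise at most ‖x‖_∞ · ((2ε)^{ℓ+1}, (2ε)^{ℓ+1}, δ(2ε)^ℓ, 2 + δ·Σ_{i=0}^{ℓ−1}(2ε)^i, (2 + δ·Σ_{i=0}^{ℓ−1}(2ε)^i)(1+ε^j)). -/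
open Matrix

lemma vecMul_Nmat (r : ℕ → ℝ) (i : ℕ) (v : Fin 5 → ℝ) :
    vecMul v (Nmat r i) = ![v 4 * (1/(2*r (i+1))),
      v 0 * ((2*r i - 1)/(2*r (i+1))) + v 1 * (r i / r (i+1)),
      v 0 * (r i / r (i+1)) + v 1 * ((2*r i + 1)/(2*r (i+1))),
      v 2 * ((2*r (i+1) - 1)/(2*r (i+1))) + v 3,
      v 2 + v 3 * ((2*r (i+1) + 1)/(2*r (i+1)))] := by
  funext t
  fin_cases t <;>
    simp [Nmat, vecMul, dotProduct, Fin.sum_univ_five, Matrix.vecHead, Matrix.vecTail]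

lemma Nmat_nonneg (r : ℕ → ℝ) (i : ℕ) (h1 : 1 ≤ r i) (h2 : 1 ≤ r (i+1)) :
    ∀ a b, 0 ≤ Nmat r i a b := by
  intro a b
  fin_cases a <;> fin_cases b <;>
    simp [Nmat, Matrix.vecHead, Matrix.vecTail] <;>
    first
      | positivity
      | (apply div_nonneg <;> linarith)

lemma vecMul_mono (N : Matrix (Fin 5) (Fin 5) ℝ) (hN : ∀ a b, 0 ≤ N a b)
    {y z : Fin 5 → ℝ} (h : ∀ s, y s ≤ z s) (t : Fin 5) :
    vecMul y N t ≤ vecMul z N t := by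
  simp only [vecMul, dotProduct]
  exact Finset.sum_le_sum fun s _ => mul_le_mul_of_nonneg_right (h s) (hN s t)

lemma vecMul_const_mul (M : ℝ) (z : Fin 5 → ℝ) (N : Matrix (Fin 5) (Fin 5) ℝ) (t : Fin 5) :
    vecMul (fun s => M * z s) N t = M * vecMul z N t := by
  simp [vecMul, dotProduct, Finset.mul_sum, mul_assoc]

section Scalar

variable {ε δ : ℝ} {J : ℕ}

/-- base bound: `1 ᵥ* N j` is bounded by the `ℓ = 0` vector. -/
lemma base_bound (hε0 : 0 < ε) (hε : ε < 1/2) (hδ : δ = 2*ε + ε^J) (hJ : 1 ≤ J)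
    (r : ℕ → ℝ) (j : ℕ) (hj : J ≤ j)
    (hR : 0 < r j) (hR' : 0 < r (j+1))
    (hrat : r j ≤ ε * r (j+1)) (hgrow : 1 ≤ ε ^ (j+1) * r (j+1)) :
    ∀ t, vecMul (fun _ => (1:ℝ)) (Nmat r j) t ≤
      ![(2*ε)^(0+1), (2*ε)^(0+1), δ * (2*ε)^0,
        2 + δ * ∑ i ∈ Finset.range 0, (2*ε)^i,
        (2 + δ * ∑ i ∈ Finset.range 0, (2*ε)^i) * (1 + ε^j)] t := by
  have hε1 : ε ≤ 1 := by linarith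
  have hratio : r j / r (j+1) ≤ ε := by
    rw [div_le_iff₀ hR']; linarith [hrat]
  have hhalf : 1/(2*r (j+1)) ≤ ε^(j+1)/2 := by
    rw [div_le_div_iff₀ (by linarith) (by norm_num)]
    nlinarith [hgrow]
  have hinv : 1/(2*r (j+1)) = (r (j+1))⁻¹ * 2⁻¹ := by ring
  have hhalf0 : 0 ≤ 1/(2*r (j+1)) := by positivity
  have hm : (2*r j - 1)/(2*r (j+1)) = r j / r (j+1) - 1/(2*r (j+1)) := by
    field_simp
  have hp : (2*r j + 1)/(2*r (j+1)) = r j / r (j+1) + 1/(2*r (j+1)) := by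
    field_simp
  have hm' : (2*r (j+1) - 1)/(2*r (j+1)) = 1 - 1/(2*r (j+1)) := by
    field_simp
  have hp' : (2*r (j+1) + 1)/(2*r (j+1)) = 1 + 1/(2*r (j+1)) := by
    field_simp
  have hpj1 : ε^(j+1) ≤ ε := by
    calc ε^(j+1) ≤ ε^1 := pow_le_pow_of_le_one hε0.le hε1 (by omega)
    _ = ε := pow_one ε
  have hpjJ : ε^(j+1) ≤ ε^J := pow_le_pow_of_le_one hε0.le hε1 (by omega)
  have hpj0 : 0 ≤ ε^j := by positivity
  have hpj' : ε^(j+1) = ε * ε^j := by ring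
  intro t
  rw [vecMul_Nmat]
  fin_cases t <;> simp
  · nlinarith [hhalf, hpj1, hinv]
  · nlinarith [hm, hratio, hhalf0]
  · rw [hδ]; nlinarith [hp, hratio, hhalf, hpjJ]
  · nlinarith [hm', hhalf0]
  · nlinarith [hp', hhalf, hpj1, hpj0, hpj']

set_option maxHeartbeats 1000000 in
/-- inductive step bound, with the geometric sum abstracted as `S`. -/
lemma step_bound (S : ℝ) (hε0 : 0 < ε) (hε : ε < 1/2) (hδ : δ = 2*ε + ε^J) (hδ1 : δ < 1)
    (hJ : 1 ≤ J) (hS0 : 0 ≤ S) (hSgeom : S * (1 - 2*ε) ≤ 1)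
    (r : ℕ → ℝ) (j ℓ : ℕ) (hj : J ≤ j)
    (hR : 0 < r (j + 2*(ℓ+1))) (hR' : 0 < r (j + 2*(ℓ+1) + 1))
    (hrat : r (j + 2*(ℓ+1)) ≤ ε * r (j + 2*(ℓ+1) + 1))
    (hgrow : 1 ≤ ε ^ (j + 2*(ℓ+1) + 1) * r (j + 2*(ℓ+1) + 1)) :
    ∀ t, vecMul ![(2*ε)^(ℓ+1), (2*ε)^(ℓ+1), δ*(2*ε)^ℓ, 2 + δ * S, (2 + δ * S) * (1 + ε^j)]
        (Nmat r (j + 2*(ℓ+1))) t ≤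
      ![(2*ε)^(ℓ+2), (2*ε)^(ℓ+2), δ * (2*ε)^(ℓ+1),
        2 + δ * (S + (2*ε)^ℓ), (2 + δ * (S + (2*ε)^ℓ)) * (1 + ε^j)] t := by
  set i : ℕ := j + 2*(ℓ+1) with hi
  have hε1 : ε ≤ 1 := by linarith
  have hratio : r i / r (i+1) ≤ ε := by
    rw [div_le_iff₀ hR']; linarith [hrat]
  have hhalf : 1/(2*r (i+1)) ≤ ε^(i+1)/2 := by
    rw [div_le_div_iff₀ (by linarith) (by norm_num)]
    nlinarith [hgrow]
  have hinv : 1/(2*r (i+1)) = (r (i+1))⁻¹ * 2⁻¹ := by ring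
  have hhalf0 : 0 ≤ 1/(2*r (i+1)) := by positivity
  have hm : (2*r i - 1)/(2*r (i+1)) = r i / r (i+1) - 1/(2*r (i+1)) := by
    field_simp
  have hp : (2*r i + 1)/(2*r (i+1)) = r i / r (i+1) + 1/(2*r (i+1)) := by
    field_simp
  have hm' : (2*r (i+1) - 1)/(2*r (i+1)) = 1 - 1/(2*r (i+1)) := by
    field_simp
  have hp' : (2*r (i+1) + 1)/(2*r (i+1)) = 1 + 1/(2*r (i+1)) := by
    field_simp
  have hδ0 : 0 ≤ δ := by rw [hδ]; positivity
  have hεJ : ε^J ≤ 1 - 2*ε := by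
    have : 2*ε + ε^J < 1 := by rw [← hδ]; exact hδ1
    linarith
  have hSJ : S * ε^J ≤ 1 :=
    le_trans (mul_le_mul_of_nonneg_left hεJ hS0) hSgeom
  have ha0 : (0:ℝ) ≤ (2*ε)^(ℓ+1) := by positivity
  have hc0 : (0:ℝ) ≤ δ*(2*ε)^ℓ := by positivity
  have hd0 : (0:ℝ) ≤ 2 + δ*S := by nlinarith
  have hej1 : ε^j ≤ 1 := pow_le_one₀ hε0.le hε1
  have hej0 : (0:ℝ) ≤ ε^j := by positivity
  have hpi0 : (0:ℝ) ≤ ε^(i+1) := by positivity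
  have hpiJ : ε^(i+1) ≤ ε^J := pow_le_pow_of_le_one hε0.le hε1 (by omega)
  have hpij : ε^(i+1) ≤ ε^j := pow_le_pow_of_le_one hε0.le hε1 (by omega)
  have hpiL : ε^(i+1) ≤ ε^(ℓ+2) := pow_le_pow_of_le_one hε0.le hε1 (by omega)
  have hpiJL : ε^(i+1) ≤ ε^J * ε^(ℓ+2) := by
    calc ε^(i+1) ≤ ε^(J + (ℓ+2)) := pow_le_pow_of_le_one hε0.le hε1 (by omega)
      _ = ε^J * ε^(ℓ+2) := pow_add ε J (ℓ+2)
  have hL0 : (0:ℝ) ≤ ε^(ℓ+2) := by positivity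
  have hcol0 : (2 + δ*S) * ε^(i+1) ≤ 3 * ε^(ℓ+2) := by
    have h1 : S * ε^(i+1) ≤ S * (ε^J * ε^(ℓ+2)) := mul_le_mul_of_nonneg_left hpiJL hS0
    have h3 : (S * ε^J) * ε^(ℓ+2) ≤ 1 * ε^(ℓ+2) := mul_le_mul_of_nonneg_right hSJ hL0
    have h4 : δ * (S * ε^(i+1)) ≤ 1 * (S * ε^(i+1)) := by
      apply mul_le_mul_of_nonneg_right (le_of_lt hδ1)
      positivity
    nlinarith [hpiL]
  have h2pow : (4:ℝ) ≤ 2^(ℓ+2) := by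
    calc (4:ℝ) = 2^2 := by norm_num
      _ ≤ 2^(ℓ+2) := pow_le_pow_right₀ (by norm_num) (by omega)
  have h2eps : (2*ε)^(ℓ+2) = 2^(ℓ+2) * ε^(ℓ+2) := mul_pow 2 ε (ℓ+2)
  have hpow1 : (2*ε)^(ℓ+2) = 2*ε * (2*ε)^(ℓ+1) := by ring
  have hpow2 : (2*ε)^(ℓ+1) = 2*ε * (2*ε)^ℓ := by ring
  have hhalf' : (r (i+1))⁻¹ * 2⁻¹ ≤ ε^(i+1)/2 := by rw [← hinv]; exact hhalf
  have hrinv0 : (0:ℝ) ≤ (r (i+1))⁻¹ := by positivity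
  intro t
  rw [vecMul_Nmat]
  fin_cases t <;> simp
  · -- column 0
    have hee0 : (0:ℝ) ≤ (2 + δ*S) * (1 + ε^j) := by nlinarith
    have k1 : (2 + δ*S) * (1 + ε^j) * ((r (i+1))⁻¹ * 2⁻¹) ≤ (2 + δ*S) * (1 + ε^j) * (ε^(i+1)/2) :=
      mul_le_mul_of_nonneg_left hhalf' hee0
    have w : (0:ℝ) ≤ (2 + δ*S) * ε^(i+1) * (1 - ε^j) :=
      mul_nonneg (mul_nonneg hd0 hpi0) (by linarith)
    have k2 : (2 + δ*S) * (1 + ε^j) * (ε^(i+1)/2) ≤ (2 + δ*S) * ε^(i+1) := by nlinarith [w]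
    have w2 : 4 * ε^(ℓ+2) ≤ 2^(ℓ+2) * ε^(ℓ+2) := mul_le_mul_of_nonneg_right h2pow hL0
    linarith [k1, k2, hcol0, w2, h2eps, hL0]
  · -- column 1
    have km : (2*ε)^(ℓ+1) * ((2*r i - 1)/(2*r (i+1)))
        = (2*ε)^(ℓ+1) * (r i / r (i+1)) - (2*ε)^(ℓ+1) * ((r (i+1))⁻¹ * 2⁻¹) := by
      rw [hm, hinv]; ring
    have k1 : (2*ε)^(ℓ+1) * (r i / r (i+1)) ≤ (2*ε)^(ℓ+1) * ε :=
      mul_le_mul_of_nonneg_left hratio ha0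
    have k0 : (0:ℝ) ≤ (2*ε)^(ℓ+1) * ((r (i+1))⁻¹ * 2⁻¹) := by positivity
    linarith [km, k1, k0, hpow1]
  · -- column 2
    rw [hδ]
    have kp : (2*ε)^(ℓ+1) * ((2*r i + 1)/(2*r (i+1)))
        = (2*ε)^(ℓ+1) * (r i / r (i+1)) + (2*ε)^(ℓ+1) * ((r (i+1))⁻¹ * 2⁻¹) := by
      rw [hp, hinv]; ring
    have k1 : (2*ε)^(ℓ+1) * (r i / r (i+1)) ≤ (2*ε)^(ℓ+1) * ε :=
      mul_le_mul_of_nonneg_left hratio ha0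
    have k2 : (2*ε)^(ℓ+1) * ((r (i+1))⁻¹ * 2⁻¹) ≤ (2*ε)^(ℓ+1) * (ε^(i+1)/2) :=
      mul_le_mul_of_nonneg_left hhalf' ha0
    have k3 : (2*ε)^(ℓ+1) * (ε^(i+1)/2) ≤ (2*ε)^(ℓ+1) * ε^J := by
      apply mul_le_mul_of_nonneg_left _ ha0
      nlinarith [hpiJ, hpi0]
    have hexp : (2*ε + ε^J) * (2*ε)^(ℓ+1)
        = 2*ε*(2*ε)^(ℓ+1) + ε^J * (2*ε)^(ℓ+1) := by ring
    linarith [kp, k1, k2, k3, hexp]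
  · -- column 3
    have km' : δ*(2*ε)^ℓ * ((2*r (i+1) - 1)/(2*r (i+1)))
        = δ*(2*ε)^ℓ - δ*(2*ε)^ℓ * ((r (i+1))⁻¹ * 2⁻¹) := by
      rw [hm', hinv]; ring
    have k0 : (0:ℝ) ≤ δ*(2*ε)^ℓ * ((r (i+1))⁻¹ * 2⁻¹) := by positivity
    linarith [km', k0]
  · -- column 4
    have kp' : (2 + δ*S) * ((2*r (i+1) + 1)/(2*r (i+1)))
        = (2 + δ*S) + (2 + δ*S) * ((r (i+1))⁻¹ * 2⁻¹) := by
      rw [hp', hinv]; ring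
    have h'' : (r (i+1))⁻¹ * 2⁻¹ ≤ ε^j := by linarith [hhalf', hpij, hej0]
    have k2 : (2 + δ*S) * ((r (i+1))⁻¹ * 2⁻¹) ≤ (2 + δ*S) * ε^j :=
      mul_le_mul_of_nonneg_left h'' hd0
    have k5 : (0:ℝ) ≤ δ*(2*ε)^ℓ * ε^j := by positivity
    have hexp : (2 + δ * (S + (2*ε)^ℓ)) * (1 + ε^j)
        = (2 + δ*S) + (2 + δ*S) * ε^j + δ*(2*ε)^ℓ + δ*(2*ε)^ℓ * ε^j := by ring
    linarith [kp', k2, k5, hexp]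

end Scalar

/-- entrywise upper bound for `x · N_j N_{j+2} ⋯ N_{j+2ℓ}` when `j ≥ J`. -/
theorem stmt3 (ε : ℝ) (hε0 : 0 < ε) (hε : ε < 1 / 2)
    (r : ℕ → ℝ) (hrpos : ∀ i, 1 ≤ i → 0 < r i)
    (hr1 : 1 / ε ≤ r 1) (hstep : ∀ i, 1 ≤ i → r i ≤ ε * r (i + 1))
    (J : ℕ) (hJ : 0 < J) (δ : ℝ) (hδ : δ = 2 * ε + ε ^ J) (hδ1 : δ < 1)
    (x : Fin 5 → ℝ) (hx : ∀ s, 0 ≤ x s) (j ℓ : ℕ) (hj : J ≤ j) :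
    ∀ t, Matrix.vecMul x (prodN r j ℓ) t ≤
      (Finset.univ.sup' Finset.univ_nonempty x) *
      ![(2 * ε) ^ (ℓ + 1), (2 * ε) ^ (ℓ + 1), δ * (2 * ε) ^ ℓ,
        2 + δ * ∑ i ∈ Finset.range ℓ, (2 * ε) ^ i,
        (2 + δ * ∑ i ∈ Finset.range ℓ, (2 * ε) ^ i) * (1 + ε ^ j)] t := by
  have hε1 : ε ≤ 1 := by linarith
  have hJ1 : 1 ≤ J := hJ
  have hj1 : 1 ≤ j := le_trans hJ1 hj
  -- growth of r
  have hgrow : ∀ i, 1 ≤ i → 1 ≤ ε ^ i * r i := by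
    intro i hi
    induction i with
    | zero => omega
    | succ n ih =>
      rcases Nat.lt_or_ge 1 (n+1) with h | h
      · have hn1 : 1 ≤ n := by omega
        have h1 := ih hn1
        have h2 := hstep n hn1
        have h3 : (0:ℝ) < ε ^ n := pow_pos hε0 n
        have : ε ^ n * r n ≤ ε ^ n * (ε * r (n+1)) :=
          mul_le_mul_of_nonneg_left h2 h3.le
        calc (1:ℝ) ≤ ε ^ n * r n := h1
          _ ≤ ε ^ n * (ε * r (n+1)) := this
          _ = ε ^ (n+1) * r (n+1) := by ring
      · have hn0 : n = 0 := by omega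
        subst hn0
        rw [pow_one]
        rw [div_le_iff₀ hε0] at hr1
        nlinarith [hr1]
  have hrge1 : ∀ i, 1 ≤ i → 1 ≤ r i := by
    intro i hi
    have h1 := hgrow i hi
    have h2 : ε ^ i ≤ 1 := pow_le_one₀ hε0.le hε1
    have h3 := (hrpos i hi).le
    nlinarith
  set M := Finset.univ.sup' Finset.univ_nonempty x with hM
  have hxM : ∀ s, x s ≤ M := fun s => Finset.le_sup' x (Finset.mem_univ s)
  have hM0 : 0 ≤ M := le_trans (hx 0) (hxM 0)
  induction ℓ with
  | zero =>
    have hp0 : prodN r j 0 = Nmat r j := by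
      show (List.map (fun t => Nmat r (j + 2 * t)) (List.range 1)).prod = Nmat r j
      rw [show List.range 1 = [0] from rfl]
      simp
    intro t
    rw [hp0]
    have hNn : ∀ a b, 0 ≤ Nmat r j a b :=
      Nmat_nonneg r j (hrge1 j hj1) (hrge1 (j+1) (by omega))
    have step1 : vecMul x (Nmat r j) t ≤ vecMul (fun _ => M) (Nmat r j) t :=
      vecMul_mono _ hNn hxM t
    have heq : (fun _ : Fin 5 => M) = (fun s : Fin 5 => M * (fun _ : Fin 5 => (1:ℝ)) s) := by
      funext s; simp
    have step2 : vecMul (fun _ : Fin 5 => M) (Nmat r j) t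
        = M * vecMul (fun _ : Fin 5 => (1:ℝ)) (Nmat r j) t := by
      rw [heq, vecMul_const_mul]
    have step3 := base_bound hε0 hε hδ hJ1 r j hj (hrpos j hj1) (hrpos (j+1) (by omega))
      (hstep j hj1) (hgrow (j+1) (by omega)) t
    calc vecMul x (Nmat r j) t ≤ vecMul (fun _ => M) (Nmat r j) t := step1
      _ = M * vecMul (fun _ : Fin 5 => (1:ℝ)) (Nmat r j) t := step2
      _ ≤ M * ![(2*ε)^(0+1), (2*ε)^(0+1), δ * (2*ε)^0,
            2 + δ * ∑ i ∈ Finset.range 0, (2*ε)^i,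
            (2 + δ * ∑ i ∈ Finset.range 0, (2*ε)^i) * (1 + ε^j)] t :=
        mul_le_mul_of_nonneg_left step3 hM0
  | succ n ih =>
    have hpn : prodN r j (n+1) = prodN r j n * Nmat r (j + 2*(n+1)) := by
      unfold prodN
      rw [List.range_succ, List.map_append, List.prod_append]
      simp
    intro t
    rw [hpn, ← vecMul_vecMul]
    have hi1 : 1 ≤ j + 2*(n+1) := by omega
    have hNn : ∀ a b, 0 ≤ Nmat r (j + 2*(n+1)) a b :=
      Nmat_nonneg r _ (hrge1 _ hi1) (hrge1 _ (by omega))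
    set vn : Fin 5 → ℝ := ![(2*ε)^(n+1), (2*ε)^(n+1), δ*(2*ε)^n,
        2 + δ * ∑ i ∈ Finset.range n, (2*ε)^i,
        (2 + δ * ∑ i ∈ Finset.range n, (2*ε)^i) * (1 + ε^j)] with hvn
    have step1 : vecMul (vecMul x (prodN r j n)) (Nmat r (j + 2*(n+1))) t
        ≤ vecMul (fun s => M * vn s) (Nmat r (j + 2*(n+1))) t :=
      vecMul_mono _ hNn (fun s => ih s) t
    have step2 : vecMul (fun s => M * vn s) (Nmat r (j + 2*(n+1))) t
        = M * vecMul vn (Nmat r (j + 2*(n+1))) t := vecMul_const_mul M vn _ t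
    -- geometric sum facts
    have hS0 : (0:ℝ) ≤ ∑ i ∈ Finset.range n, (2*ε)^i :=
      Finset.sum_nonneg fun k _ => by positivity
    have hSgeom : (∑ i ∈ Finset.range n, (2*ε)^i) * (1 - 2*ε) ≤ 1 := by
      have h := geom_sum_mul (2*ε) n
      have h2 : (0:ℝ) ≤ (2*ε)^n := by positivity
      nlinarith [h]
    have step3 := step_bound (∑ i ∈ Finset.range n, (2*ε)^i) hε0 hε hδ hδ1 hJ1 hS0 hSgeom
      r j n hj (hrpos _ hi1) (hrpos _ (by omega)) (hstep _ hi1) (hgrow _ (by omega)) t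
    have hfin : ![(2*ε)^(n+2), (2*ε)^(n+2), δ * (2*ε)^(n+1),
          2 + δ * ((∑ i ∈ Finset.range n, (2*ε)^i) + (2*ε)^n),
          (2 + δ * ((∑ i ∈ Finset.range n, (2*ε)^i) + (2*ε)^n)) * (1 + ε^j)] t
        = ![(2*ε)^(n+1+1), (2*ε)^(n+1+1), δ * (2*ε)^(n+1),
          2 + δ * ∑ i ∈ Finset.range (n+1), (2*ε)^i,
          (2 + δ * ∑ i ∈ Finset.range (n+1), (2*ε)^i) * (1 + ε^j)] t := by
      have hs : ∑ i ∈ Finset.range (n+1), (2*ε)^i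
          = (∑ i ∈ Finset.range n, (2*ε)^i) + (2*ε)^n := Finset.sum_range_succ _ n
      fin_cases t <;> simp [hs]
    calc vecMul (vecMul x (prodN r j n)) (Nmat r (j + 2*(n+1))) t
        ≤ vecMul (fun s => M * vn s) (Nmat r (j + 2*(n+1))) t := step1
      _ = M * vecMul vn (Nmat r (j + 2*(n+1))) t := step2
      _ ≤ M * ![(2*ε)^(n+2), (2*ε)^(n+2), δ * (2*ε)^(n+1),
            2 + δ * ((∑ i ∈ Finset.range n, (2*ε)^i) + (2*ε)^n),
            (2 + δ * ((∑ i ∈ Finset.range n, (2*ε)^i) + (2*ε)^n)) * (1 + ε^j)] t :=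
          mul_le_mul_of_nonneg_left step3 hM0
      _ = M * ![(2*ε)^(n+1+1), (2*ε)^(n+1+1), δ * (2*ε)^(n+1),
            2 + δ * ∑ i ∈ Finset.range (n+1), (2*ε)^i,
            (2 + δ * ∑ i ∈ Finset.range (n+1), (2*ε)^i) * (1 + ε^j)] t := by rw [hfin]
end

section
/- With ε, (r_i), and N_i as above, for every j ≥ 0 the sequence of matrix products (N_j·N_{j+2}·...·N_{j+2ℓ})_{ℓ≥0} converges (entrywise) as ℓ → ∞. -/
open Matrix

section AuxiliaryLemmas
open Filter

lemma aux_conv (σ τ ρ μ B G C D M : ℝ)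
    (hσ1 : σ < 1) (hσ0 : 0 < σ) (hτ0 : 0 ≤ τ) (hτσ : τ ≤ σ) (hρ0 : 0 ≤ ρ)
    (hD0 : 0 ≤ D) (hμ0 : 0 ≤ μ)
    (p q s t u a b c d e f : ℕ → ℝ)
    (hp : ∀ m, p (m+1) = u m * f (m+1))
    (hq : ∀ m, q (m+1) = p m * c (m+1) + q m * d (m+1))
    (hs : ∀ m, s (m+1) = p m * d (m+1) + q m * e (m+1))
    (ht : ∀ m, t (m+1) = s m * a (m+1) + t m)
    (hu : ∀ m, u (m+1) = s m + t m * b (m+1))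
    (hc : ∀ m, |c (m+1)| ≤ ρ) (hd : ∀ m, |d (m+1)| ≤ ρ) (he : ∀ m, |e (m+1)| ≤ ρ)
    (ha : ∀ m, |a (m+1)| ≤ 1) (hb : ∀ m, |b (m+1)| ≤ 2)
    (hb1 : ∀ m, |b (m+1) - 1| ≤ μ * τ ^ (m+1))
    (hf : ∀ m, |f (m+1)| ≤ μ * τ ^ (m+1))
    (hbp : |p 0| ≤ B) (hbq : |q 0| ≤ G) (hbs : |s 0| ≤ G)
    (hbt : |t 0| ≤ C - D) (hbu : |u 0| ≤ M)
    (h1 : M * μ ≤ B) (h2 : ρ * (B + G) ≤ G * σ) (h3 : G ≤ D * (1 - σ))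
    (h4 : G + 2 * C ≤ M) :
    (∃ P, Tendsto p atTop (nhds P)) ∧ (∃ Q, Tendsto q atTop (nhds Q)) ∧
    (∃ S, Tendsto s atTop (nhds S)) ∧ (∃ T, Tendsto t atTop (nhds T)) ∧
    (∃ U, Tendsto u atTop (nhds U)) := by
  have hM0 : 0 ≤ M := le_trans (abs_nonneg _) hbu
  have hG0 : 0 ≤ G := le_trans (abs_nonneg _) hbq
  have hB0 : 0 ≤ B := le_trans (abs_nonneg _) hbp
  have hτ1 : τ < 1 := lt_of_le_of_lt hτσ hσ1
  have key : ∀ m, |p m| ≤ B * τ ^ m ∧ |q m| ≤ G * σ ^ m ∧ |s m| ≤ G * σ ^ m ∧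
      |t m| ≤ C - D * σ ^ m ∧ |u m| ≤ M := by
    intro m
    induction m with
    | zero => simpa using ⟨hbp, hbq, hbs, hbt, hbu⟩
    | succ m ih =>
      obtain ⟨ip, iq, is, it, iu⟩ := ih
      have hτm : (0:ℝ) ≤ τ ^ m := pow_nonneg hτ0 m
      have hσm : (0:ℝ) ≤ σ ^ m := le_of_lt (pow_pos hσ0 m)
      have hσm1 : σ ^ m ≤ 1 := pow_le_one₀ (le_of_lt hσ0) (le_of_lt hσ1)
      have hτσm : τ ^ m ≤ σ ^ m := pow_le_pow_left₀ hτ0 hτσ m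
      have htm : |t m| ≤ C := le_trans it (by linarith [mul_nonneg hD0 hσm])
      have hqs : B * τ ^ m * ρ + G * σ ^ m * ρ ≤ G * σ ^ (m+1) := by
        have e1 : B * τ ^ m * ρ ≤ B * σ ^ m * ρ :=
          mul_le_mul_of_nonneg_right (mul_le_mul_of_nonneg_left hτσm hB0) hρ0
        have e2 : (ρ * (B + G)) * σ ^ m ≤ (G * σ) * σ ^ m :=
          mul_le_mul_of_nonneg_right h2 hσm
        calc B * τ ^ m * ρ + G * σ ^ m * ρ ≤ B * σ ^ m * ρ + G * σ ^ m * ρ := by linarith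
          _ = (ρ * (B + G)) * σ ^ m := by ring
          _ ≤ (G * σ) * σ ^ m := e2
          _ = G * σ ^ (m+1) := by ring
      refine ⟨?_, ?_, ?_, ?_, ?_⟩
      · rw [hp m, abs_mul]
        calc |u m| * |f (m+1)| ≤ M * (μ * τ ^ (m+1)) :=
            mul_le_mul iu (hf m) (abs_nonneg _) hM0
          _ = (M * μ) * τ ^ (m+1) := by ring
          _ ≤ B * τ ^ (m+1) := mul_le_mul_of_nonneg_right h1 (pow_nonneg hτ0 _)
      · rw [hq m]
        calc |p m * c (m+1) + q m * d (m+1)| ≤ |p m| * |c (m+1)| + |q m| * |d (m+1)| := by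
              rw [← abs_mul, ← abs_mul]; exact abs_add_le _ _
          _ ≤ (B * τ ^ m) * ρ + (G * σ ^ m) * ρ :=
              add_le_add (mul_le_mul ip (hc m) (abs_nonneg _) (by positivity))
                (mul_le_mul iq (hd m) (abs_nonneg _) (by positivity))
          _ ≤ G * σ ^ (m + 1) := hqs
      · rw [hs m]
        calc |p m * d (m+1) + q m * e (m+1)| ≤ |p m| * |d (m+1)| + |q m| * |e (m+1)| := by
              rw [← abs_mul, ← abs_mul]; exact abs_add_le _ _
          _ ≤ (B * τ ^ m) * ρ + (G * σ ^ m) * ρ :=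
              add_le_add (mul_le_mul ip (hd m) (abs_nonneg _) (by positivity))
                (mul_le_mul iq (he m) (abs_nonneg _) (by positivity))
          _ ≤ G * σ ^ (m + 1) := hqs
      · rw [ht m]
        have e3 : G * σ ^ m ≤ (D * (1 - σ)) * σ ^ m := mul_le_mul_of_nonneg_right h3 hσm
        have e4 : (D * (1 - σ)) * σ ^ m = D * σ ^ m - D * σ ^ (m+1) := by ring
        calc |s m * a (m+1) + t m| ≤ |s m| * |a (m+1)| + |t m| := by
              rw [← abs_mul]; exact abs_add_le _ _
          _ ≤ (G * σ ^ m) * 1 + (C - D * σ ^ m) :=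
              add_le_add (mul_le_mul is (ha m) (abs_nonneg _) (by positivity)) it
          _ ≤ C - D * σ ^ (m + 1) := by rw [e4] at e3; linarith
      · rw [hu m]
        have e5 : G * σ ^ m ≤ G := by
          calc G * σ ^ m ≤ G * 1 := mul_le_mul_of_nonneg_left hσm1 hG0
            _ = G := mul_one G
        calc |s m + t m * b (m+1)| ≤ |s m| + |t m| * |b (m+1)| := by
              rw [← abs_mul]; exact abs_add_le _ _
          _ ≤ G * σ ^ m + C * 2 :=
              add_le_add is (mul_le_mul htm (hb m) (abs_nonneg _) (le_trans (abs_nonneg _) htm))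
          _ ≤ M := by linarith
  have hτlim : Tendsto (fun m : ℕ => B * τ ^ m) atTop (nhds 0) := by
    simpa using (tendsto_pow_atTop_nhds_zero_of_lt_one hτ0 hτ1).const_mul B
  have hσlim : Tendsto (fun m : ℕ => G * σ ^ m) atTop (nhds 0) := by
    simpa using (tendsto_pow_atTop_nhds_zero_of_lt_one (le_of_lt hσ0) hσ1).const_mul G
  have hplim : Tendsto p atTop (nhds 0) := squeeze_zero_norm (fun m => (key m).1) hτlim
  have hqlim : Tendsto q atTop (nhds 0) := squeeze_zero_norm (fun m => (key m).2.1) hσlim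
  have hslim : Tendsto s atTop (nhds 0) := squeeze_zero_norm (fun m => (key m).2.2.1) hσlim
  have htc : CauchySeq t := by
    apply cauchySeq_of_le_geometric σ G hσ1
    intro n
    rw [Real.dist_eq, ht n]
    have e : |t n - (s n * a (n+1) + t n)| = |s n * a (n+1)| := by
      rw [show t n - (s n * a (n+1) + t n) = -(s n * a (n+1)) by ring, abs_neg]
    rw [e, abs_mul]
    calc |s n| * |a (n+1)| ≤ (G * σ ^ n) * 1 :=
          mul_le_mul (key n).2.2.1 (ha n) (abs_nonneg _) (by positivity)
      _ = G * σ ^ n := by ring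
  obtain ⟨T, hT⟩ := cauchySeq_tendsto_of_complete htc
  have hblim : Tendsto (fun m => b (m + 1)) atTop (nhds 1) := by
    have h0 : Tendsto (fun m => b (m + 1) - 1) atTop (nhds 0) := by
      apply squeeze_zero_norm (fun m => hb1 m)
      have h' := (tendsto_pow_atTop_nhds_zero_of_lt_one hτ0 hτ1).const_mul μ
      have h'' : Tendsto (fun m : ℕ => μ * τ ^ (m + 1)) atTop (nhds (μ * 0)) :=
        ((tendsto_add_atTop_iff_nat 1).mpr h')
      simpa using h''
    simpa using h0.add_const 1
  have hulim : Tendsto u atTop (nhds T) := by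
    apply (tendsto_add_atTop_iff_nat 1).mp
    have h5 : Tendsto (fun m => s m + t m * b (m+1)) atTop (nhds (0 + T * 1)) :=
      hslim.add ((hT).mul hblim)
    simpa using h5.congr (fun m => (hu m).symm)
  exact ⟨⟨0, hplim⟩, ⟨0, hqlim⟩, ⟨0, hslim⟩, ⟨T, hT⟩, ⟨T, hulim⟩⟩

lemma prodN_succ (r : ℕ → ℝ) (j ℓ : ℕ) :
    prodN r j (ℓ + 1) = prodN r j ℓ * Nmat r (j + 2 * (ℓ + 1)) := by
  simp [prodN, List.range_succ, Matrix.mul_assoc]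

lemma mulN_entries (r : ℕ → ℝ) (i : ℕ) (A : Matrix (Fin 5) (Fin 5) ℝ) (i0 : Fin 5) :
    (A * Nmat r i) i0 0 = A i0 4 * (1 / (2 * r (i + 1)))
    ∧ (A * Nmat r i) i0 1 = A i0 0 * ((2 * r i - 1) / (2 * r (i + 1))) + A i0 1 * (r i / r (i + 1))
    ∧ (A * Nmat r i) i0 2 = A i0 0 * (r i / r (i + 1)) + A i0 1 * ((2 * r i + 1) / (2 * r (i + 1)))
    ∧ (A * Nmat r i) i0 3 = A i0 2 * ((2 * r (i + 1) - 1) / (2 * r (i + 1))) + A i0 3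
    ∧ (A * Nmat r i) i0 4 = A i0 2 + A i0 3 * ((2 * r (i + 1) + 1) / (2 * r (i + 1))) := by
  refine ⟨?_, ?_, ?_, ?_, ?_⟩ <;>
    simp [Nmat, Matrix.mul_apply, Fin.sum_univ_five, Matrix.vecHead, Matrix.vecTail]

section growth
variable (ε : ℝ) (hε0 : 0 < ε) (hε : ε < 1 / 2) (r : ℕ → ℝ)
  (hrpos : ∀ i, 1 ≤ i → 0 < r i)
  (hr1 : 1 / ε ≤ r 1) (hstep : ∀ i, 1 ≤ i → r i ≤ ε * r (i + 1))

include hε0 hε hrpos hr1 hstep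

lemma r_growth : ∀ K, 1 ≤ K → 1 ≤ ε ^ K * r K := by
  intro K hK
  induction K with
  | zero => omega
  | succ n ih =>
    rcases Nat.eq_or_lt_of_le hK with h | h
    · have : n = 0 := by omega
      subst this
      have : ε * (1 / ε) ≤ ε * r 1 := by
        apply mul_le_mul_of_nonneg_left hr1 hε0.le
      have hne : ε ≠ 0 := ne_of_gt hε0
      have h1 : (1:ℝ) ≤ ε * r 1 := by
        calc (1:ℝ) = ε * (1/ε) := by field_simp
          _ ≤ ε * r 1 := this
      simpa using h1
    · have hn1 : 1 ≤ n := by omega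
      have ih' := ih hn1
      have hs := hstep n hn1
      have hpow : (0:ℝ) < ε ^ n := pow_pos hε0 n
      calc (1:ℝ) ≤ ε ^ n * r n := ih'
        _ ≤ ε ^ n * (ε * r (n+1)) := by
            apply mul_le_mul_of_nonneg_left hs hpow.le
        _ = ε ^ (n+1) * r (n+1) := by ring

lemma r_inv_bound : ∀ K n, 1 ≤ K → n ≤ K → 1 / (2 * r K) ≤ ε ^ n / 2 := by
  intro K n hK hnK
  have h1 := r_growth ε hε0 hε r hrpos hr1 hstep K hK
  have hrK := hrpos K hK
  have hεK : (0:ℝ) < ε ^ K := pow_pos hε0 K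
  have h2 : ε ^ K ≤ ε ^ n := pow_le_pow_of_le_one hε0.le (by linarith) hnK
  rw [div_le_div_iff₀ (by linarith) (by norm_num)]
  nlinarith

lemma r_ge_two : ∀ K, 1 ≤ K → 2 ≤ r K := by
  intro K hK
  have h1 := r_growth ε hε0 hε r hrpos hr1 hstep K hK
  have hrK := hrpos K hK
  have h2 : ε ^ K ≤ ε ^ 1 := pow_le_pow_of_le_one hε0.le (by linarith) hK
  have hεK : (0:ℝ) < ε ^ K := pow_pos hε0 K
  simp only [pow_one] at h2
  nlinarith

lemma eps_r_ge_one : ∀ K, 1 ≤ K → 1 ≤ ε * r K := by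
  intro K hK
  have h1 := r_growth ε hε0 hε r hrpos hr1 hstep K hK
  have hrK := hrpos K hK
  have h2 : ε ^ K ≤ ε ^ 1 := pow_le_pow_of_le_one hε0.le (by linarith) hK
  simp only [pow_one] at h2
  nlinarith

end growth

end AuxiliaryLemmas

set_option maxHeartbeats 1000000

/-- for every `j`, the products `N_j N_{j+2} ⋯ N_{j+2ℓ}` converge as `ℓ → ∞`. -/
theorem stmt4 (ε : ℝ) (hε0 : 0 < ε) (hε : ε < 1 / 2)
    (r : ℕ → ℝ) (hrpos : ∀ i, 1 ≤ i → 0 < r i)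
    (hr1 : 1 / ε ≤ r 1) (hstep : ∀ i, 1 ≤ i → r i ≤ ε * r (i + 1)) (j : ℕ) :
    ∃ L : Matrix (Fin 5) (Fin 5) ℝ,
      Filter.Tendsto (fun ℓ => prodN r j ℓ) Filter.atTop (nhds L) := by
  have hε1 : ε < 1 := by linarith
  have hω : (0:ℝ) < 1 - 2*ε := by linarith
  set ω : ℝ := 1 - 2*ε with hωdef
  set ρ : ℝ := 2*ε with hρdef
  set σ : ℝ := (1 + 2*ε)/2 with hσdef
  set τ : ℝ := ε^2 with hτdef
  have hρ0 : 0 ≤ ρ := by rw [hρdef]; linarith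
  have hσ0 : 0 < σ := by rw [hσdef]; linarith
  have hσ1 : σ < 1 := by rw [hσdef]; linarith
  have hτ0 : 0 ≤ τ := by rw [hτdef]; positivity
  have hτσ : τ ≤ σ := by
    rw [hτdef, hσdef]
    have h := mul_le_mul hε.le hε.le hε0.le (by norm_num : (0:ℝ) ≤ 1/2)
    have h2 : ε^2 = ε*ε := sq ε
    linarith only [h, h2, hε0]
  have hτ1 : τ < 1 := lt_of_le_of_lt hτσ hσ1
  clear_value ρ σ τ
  set A₀ : ℝ := (1 + 4/ω) * (4*ε/ω) with hA₀def
  have hA₀ : 0 < A₀ := by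
    rw [hA₀def]
    have h1 : (0:ℝ) < 4/ω := div_pos (by norm_num) hω
    have h2 : (0:ℝ) < 4*ε/ω := div_pos (by linarith) hω
    exact mul_pos (by linarith only [h1]) h2
  set δ : ℝ := 1/(2*A₀+2) with hδdef
  have hδ0 : 0 < δ := by rw [hδdef]; exact div_pos one_pos (by linarith)
  have hδeq : δ * (2*A₀+2) = 1 := by rw [hδdef]; field_simp
  clear_value A₀ δ
  obtain ⟨m₀, hm₀⟩ := exists_pow_lt_of_lt_one hδ0 hτ1
  set μ : ℝ := ε^(2*m₀+1)/2 with hμdef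
  have hμ0 : 0 ≤ μ := by rw [hμdef]; positivity
  clear_value μ
  have hμτ : μ ≤ τ^m₀ / 2 := by
    rw [hμdef, hτdef, ← pow_mul]
    have h1 : ε^(2*m₀+1) = ε^(2*m₀) * ε := pow_succ ε (2*m₀)
    have h2 : (0:ℝ) ≤ ε^(2*m₀) := pow_nonneg hε0.le _
    have h3 := mul_le_mul_of_nonneg_left hε1.le h2
    linarith only [h1, h3]
  have hμδ : μ ≤ δ/2 := by linarith only [hμτ, hm₀]
  have hμA : μ * A₀ ≤ 1/2 := by
    have h1 : μ * A₀ ≤ (δ/2) * A₀ := mul_le_mul_of_nonneg_right hμδ hA₀.le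
    linarith only [h1, hδeq, hδ0]
  have hμ1 : μ ≤ 1 := by linarith only [hμδ, hδeq, mul_pos hδ0 hA₀]
  -- the key bound on 1/(2 r K)
  have hfb : ∀ m : ℕ, |1 / (2 * r (j + 2*(m₀+m+1) + 1))| ≤ μ * τ^(m+1) := by
    intro m
    have hK1 : 1 ≤ j + 2*(m₀+m+1) + 1 := by omega
    have hb := r_inv_bound ε hε0 hε r hrpos hr1 hstep (j + 2*(m₀+m+1) + 1)
      (2*m₀+2*m+3) hK1 (by omega)
    have hy := hrpos _ hK1
    have habs : |1 / (2 * r (j + 2*(m₀+m+1) + 1))| = 1 / (2 * r (j + 2*(m₀+m+1) + 1)) :=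
      abs_of_nonneg (by positivity)
    have heq : μ * τ^(m+1) = ε^(2*m₀+2*m+3)/2 := by
      rw [hμdef, hτdef, ← pow_mul]
      rw [div_mul_eq_mul_div, ← pow_add]
      congr 2
      omega
    rw [habs, heq]
    exact hb
  -- entrywise limits
  have main : ∀ (i0 k : Fin 5), ∃ l,
      Filter.Tendsto (fun ℓ => prodN r j ℓ i0 k) Filter.atTop (nhds l) := by
    intro i0 k
    set p₀ : ℝ := |prodN r j m₀ i0 0| with hp₀def
    set q₀ : ℝ := |prodN r j m₀ i0 1| with hq₀def
    set s₀ : ℝ := |prodN r j m₀ i0 2| with hs₀def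
    set t₀ : ℝ := |prodN r j m₀ i0 3| with ht₀def
    set u₀ : ℝ := |prodN r j m₀ i0 4| with hu₀def
    have hp₀0 : 0 ≤ p₀ := abs_nonneg _
    have hq₀0 : 0 ≤ q₀ := abs_nonneg _
    have hs₀0 : 0 ≤ s₀ := abs_nonneg _
    have ht₀0 : 0 ≤ t₀ := abs_nonneg _
    have hu₀0 : 0 ≤ u₀ := abs_nonneg _
    have h4ω : (0:ℝ) ≤ 4/ω := le_of_lt (div_pos (by norm_num) hω)
    have h4εω : (0:ℝ) ≤ 4*ε/ω := le_of_lt (div_pos (by linarith) hω)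
    have h2ω : (0:ℝ) ≤ 2/ω := le_of_lt (div_pos (by norm_num) hω)
    set β : ℝ := (1 + 4/ω)*(q₀+s₀) + 2*t₀ + u₀ with hβdef
    have hβ0 : 0 ≤ β := by
      rw [hβdef]
      have h := mul_nonneg (by linarith only [h4ω] : (0:ℝ) ≤ 1 + 4/ω)
        (by linarith only [hq₀0, hs₀0] : (0:ℝ) ≤ q₀ + s₀)
      linarith only [h, ht₀0, hu₀0]
    set B : ℝ := 2*β + 2*p₀ + 2 with hBdef
    have hB0 : 0 ≤ B := by rw [hBdef]; linarith only [hβ0, hp₀0]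
    set G : ℝ := (4*ε/ω)*B + (q₀ + s₀) with hGdef
    have hG0 : 0 ≤ G := by
      rw [hGdef]
      have h := mul_nonneg h4εω hB0
      linarith only [h, hq₀0, hs₀0]
    set D : ℝ := (2/ω)*G with hDdef
    have hD0 : 0 ≤ D := by rw [hDdef]; exact mul_nonneg h2ω hG0
    set C : ℝ := t₀ + D with hCdef
    have hC0 : 0 ≤ C := by rw [hCdef]; linarith only [ht₀0, hD0]
    set M : ℝ := G + 2*C + u₀ with hMdef
    have hMeq : M = A₀ * B + β := by
      rw [hMdef, hCdef, hDdef, hGdef, hA₀def, hβdef]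
      field_simp
      ring
    clear_value p₀ q₀ s₀ t₀ u₀ β B G D C M
    have H :=
      aux_conv σ τ ρ μ B G C D M hσ1 hσ0 hτ0 hτσ hρ0 hD0 hμ0
        (fun m => prodN r j (m₀ + m) i0 0)
        (fun m => prodN r j (m₀ + m) i0 1)
        (fun m => prodN r j (m₀ + m) i0 2)
        (fun m => prodN r j (m₀ + m) i0 3)
        (fun m => prodN r j (m₀ + m) i0 4)
        (fun m => (2 * r (j + 2*(m₀ + m) + 1) - 1) / (2 * r (j + 2*(m₀ + m) + 1)))
        (fun m => (2 * r (j + 2*(m₀ + m) + 1) + 1) / (2 * r (j + 2*(m₀ + m) + 1)))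
        (fun m => (2 * r (j + 2*(m₀ + m)) - 1) / (2 * r (j + 2*(m₀ + m) + 1)))
        (fun m => r (j + 2*(m₀ + m)) / r (j + 2*(m₀ + m) + 1))
        (fun m => (2 * r (j + 2*(m₀ + m)) + 1) / (2 * r (j + 2*(m₀ + m) + 1)))
        (fun m => 1 / (2 * r (j + 2*(m₀ + m) + 1)))
        ?hp ?hq ?hs ?ht ?hu ?hc ?hd ?he ?ha ?hb ?hb1 ?hf
        ?hbp ?hbq ?hbs ?hbt ?hbu ?h1 ?h2 ?h3 ?h4
    · obtain ⟨⟨P0, hP0⟩, ⟨Q0, hQ0⟩, ⟨S0, hS0⟩, ⟨T0, hT0⟩, ⟨U0, hU0⟩⟩ := H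
      fin_cases k
      · exact ⟨P0, (Filter.tendsto_add_atTop_iff_nat m₀).mp
          (hP0.congr (fun n => by rw [Nat.add_comm]; rfl))⟩
      · exact ⟨Q0, (Filter.tendsto_add_atTop_iff_nat m₀).mp
          (hQ0.congr (fun n => by rw [Nat.add_comm]; rfl))⟩
      · exact ⟨S0, (Filter.tendsto_add_atTop_iff_nat m₀).mp
          (hS0.congr (fun n => by rw [Nat.add_comm]; rfl))⟩
      · exact ⟨T0, (Filter.tendsto_add_atTop_iff_nat m₀).mp
          (hT0.congr (fun n => by rw [Nat.add_comm]; rfl))⟩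
      · exact ⟨U0, (Filter.tendsto_add_atTop_iff_nat m₀).mp
          (hU0.congr (fun n => by rw [Nat.add_comm]; rfl))⟩
    case hp =>
      intro m
      have e := (mulN_entries r (j + 2*(m₀+m+1)) (prodN r j (m₀+m)) i0).1
      rw [← prodN_succ r j (m₀+m)] at e
      have hidx : m₀ + (m+1) = m₀ + m + 1 := rfl
      simp only [hidx]
      exact e
    case hq =>
      intro m
      have e := (mulN_entries r (j + 2*(m₀+m+1)) (prodN r j (m₀+m)) i0).2.1
      rw [← prodN_succ r j (m₀+m)] at e
      have hidx : m₀ + (m+1) = m₀ + m + 1 := rfl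
      simp only [hidx]
      exact e
    case hs =>
      intro m
      have e := (mulN_entries r (j + 2*(m₀+m+1)) (prodN r j (m₀+m)) i0).2.2.1
      rw [← prodN_succ r j (m₀+m)] at e
      have hidx : m₀ + (m+1) = m₀ + m + 1 := rfl
      simp only [hidx]
      exact e
    case ht =>
      intro m
      have e := (mulN_entries r (j + 2*(m₀+m+1)) (prodN r j (m₀+m)) i0).2.2.2.1
      rw [← prodN_succ r j (m₀+m)] at e
      have hidx : m₀ + (m+1) = m₀ + m + 1 := rfl
      simp only [hidx]
      exact e
    case hu =>
      intro m
      have e := (mulN_entries r (j + 2*(m₀+m+1)) (prodN r j (m₀+m)) i0).2.2.2.2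
      rw [← prodN_succ r j (m₀+m)] at e
      have hidx : m₀ + (m+1) = m₀ + m + 1 := rfl
      simp only [hidx]
      exact e
    case hc =>
      intro m
      have hidx : m₀ + (m+1) = m₀ + m + 1 := rfl
      simp only [hidx]
      have hi1 : 1 ≤ j + 2*(m₀+m+1) := by omega
      have hK1 : 1 ≤ j + 2*(m₀+m+1) + 1 := by omega
      have hx := hrpos _ hi1
      have hy := hrpos _ hK1
      have hxy := hstep _ hi1
      have hx2 := r_ge_two ε hε0 hε r hrpos hr1 hstep _ hi1
      have hεy := eps_r_ge_one ε hε0 hε r hrpos hr1 hstep _ hK1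
      rw [hρdef, abs_of_nonneg (div_nonneg (by linarith only [hx2]) (by linarith only [hy]))]
      rw [div_le_iff₀ (by linarith only [hy])]
      linarith only [hxy, hεy]
    case hd =>
      intro m
      have hidx : m₀ + (m+1) = m₀ + m + 1 := rfl
      simp only [hidx]
      have hi1 : 1 ≤ j + 2*(m₀+m+1) := by omega
      have hK1 : 1 ≤ j + 2*(m₀+m+1) + 1 := by omega
      have hx := hrpos _ hi1
      have hy := hrpos _ hK1
      have hxy := hstep _ hi1
      have hεy := eps_r_ge_one ε hε0 hε r hrpos hr1 hstep _ hK1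
      rw [hρdef, abs_of_nonneg (div_nonneg (by linarith only [hx]) (by linarith only [hy]))]
      rw [div_le_iff₀ (by linarith only [hy])]
      linarith only [hxy, mul_pos hε0 hy]
    case he =>
      intro m
      have hidx : m₀ + (m+1) = m₀ + m + 1 := rfl
      simp only [hidx]
      have hi1 : 1 ≤ j + 2*(m₀+m+1) := by omega
      have hK1 : 1 ≤ j + 2*(m₀+m+1) + 1 := by omega
      have hx := hrpos _ hi1
      have hy := hrpos _ hK1
      have hxy := hstep _ hi1
      have hεy := eps_r_ge_one ε hε0 hε r hrpos hr1 hstep _ hK1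
      rw [hρdef, abs_of_nonneg (div_nonneg (by linarith only [hx]) (by linarith only [hy]))]
      rw [div_le_iff₀ (by linarith only [hy])]
      linarith only [hxy, hεy]
    case ha =>
      intro m
      have hidx : m₀ + (m+1) = m₀ + m + 1 := rfl
      simp only [hidx]
      have hK1 : 1 ≤ j + 2*(m₀+m+1) + 1 := by omega
      have hy := hrpos _ hK1
      have hy2 := r_ge_two ε hε0 hε r hrpos hr1 hstep _ hK1
      rw [abs_of_nonneg (div_nonneg (by linarith only [hy2]) (by linarith only [hy]))]
      rw [div_le_one (by linarith only [hy])]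
      linarith only [hy]
    case hb =>
      intro m
      have hidx : m₀ + (m+1) = m₀ + m + 1 := rfl
      simp only [hidx]
      have hK1 : 1 ≤ j + 2*(m₀+m+1) + 1 := by omega
      have hy := hrpos _ hK1
      have hy2 := r_ge_two ε hε0 hε r hrpos hr1 hstep _ hK1
      rw [abs_of_nonneg (div_nonneg (by linarith only [hy2]) (by linarith only [hy]))]
      rw [div_le_iff₀ (by linarith only [hy])]
      linarith only [hy2]
    case hb1 =>
      intro m
      have hidx : m₀ + (m+1) = m₀ + m + 1 := rfl
      simp only [hidx]
      have hK1 : 1 ≤ j + 2*(m₀+m+1) + 1 := by omega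
      have hy := hrpos _ hK1
      have heq : (2 * r (j + 2*(m₀+m+1) + 1) + 1) / (2 * r (j + 2*(m₀+m+1) + 1)) - 1
          = 1 / (2 * r (j + 2*(m₀+m+1) + 1)) := by
        field_simp
        ring
      rw [heq]
      exact hfb m
    case hf =>
      intro m
      have hidx : m₀ + (m+1) = m₀ + m + 1 := rfl
      simp only [hidx]
      exact hfb m
    case hbp =>
      show |prodN r j (m₀ + 0) i0 0| ≤ B
      have hidx : m₀ + 0 = m₀ := rfl
      rw [hidx, ← hp₀def, hBdef]
      linarith only [hβ0, hp₀0]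
    case hbq =>
      show |prodN r j (m₀ + 0) i0 1| ≤ G
      have hidx : m₀ + 0 = m₀ := rfl
      rw [hidx, ← hq₀def, hGdef]
      linarith only [mul_nonneg h4εω hB0, hs₀0]
    case hbs =>
      show |prodN r j (m₀ + 0) i0 2| ≤ G
      have hidx : m₀ + 0 = m₀ := rfl
      rw [hidx, ← hs₀def, hGdef]
      linarith only [mul_nonneg h4εω hB0, hq₀0]
    case hbt =>
      show |prodN r j (m₀ + 0) i0 3| ≤ C - D
      have hidx : m₀ + 0 = m₀ := rfl
      have : C - D = t₀ := by rw [hCdef]; ring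
      rw [hidx, ← ht₀def, this]
    case hbu =>
      show |prodN r j (m₀ + 0) i0 4| ≤ M
      have hidx : m₀ + 0 = m₀ := rfl
      rw [hidx, ← hu₀def, hMdef]
      linarith only [hG0, hC0]
    case h1 =>
      have h1 : A₀ * B * μ ≤ (1/2) * B :=
        le_of_eq_of_le (by ring) (mul_le_mul_of_nonneg_right hμA hB0)
      have h2 : β * μ ≤ β := by
        have h := mul_le_mul_of_nonneg_left hμ1 hβ0
        linarith only [h]
      have hBβ : 2*β ≤ B := by rw [hBdef]; linarith only [hp₀0]
      calc M * μ = A₀ * B * μ + β * μ := by rw [hMeq]; ring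
        _ ≤ (1/2)*B + β := add_le_add h1 h2
        _ ≤ B := by linarith only [hBβ]
    case h2 =>
      have hω' : (1:ℝ) - 2*ε ≠ 0 := by linarith only [hε]
      have hGω : G * (1 - 2*ε) = 4*ε*B + (q₀+s₀)*(1 - 2*ε) := by
        rw [hGdef, hωdef, hρdef]; field_simp
        have hne : (1:ℝ) - ε*2 ≠ 0 := by linarith only [hε]
        linear_combination (4*ε*B) * mul_inv_cancel₀ hne
      have h3 : (0:ℝ) ≤ (q₀+s₀)*(1 - 2*ε) :=
        mul_nonneg (by linarith only [hq₀0, hs₀0]) (by linarith only [hε])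
      rw [hρdef, hσdef]
      linarith only [hGω, h3]
    case h3 =>
      have hω' : (1:ℝ) - 2*ε ≠ 0 := by linarith only [hε]
      have heq : D * (1 - σ) = G := by
        rw [hDdef, hσdef, hωdef, hρdef]
        field_simp
        ring
      rw [heq]
    case h4 => rw [hMdef]; linarith only [hu₀0]
  choose L hL using fun i0 => main i0
  exact ⟨Matrix.of (fun i0 k => L i0 k),
    tendsto_pi_nhds.2 fun i0 => tendsto_pi_nhds.2 fun k => hL i0 k⟩
end

section
/- Let (n_i)_{i≥1} and (m_i)_{i≥0} be positive reals with m_0 = 1, n_i/m_{i−1} ≥ 2 and m_i/n_i ≥ 2 for all i ≥ 1, and suppose (G1) holds: Π_{j=1}^{i}(n_j/m_{j−1}) ≤ Π_{j=1}^{i}(m_j/n_j) ≤ Π_{j=1}^{i+1}(n_j/m_{j−1}) for all sufficiently large i, and (G2) holds: m_{i+1}/n_{i+1} = o(Π_{j=1}^{i} n_j/m_{j−1}) as i → ∞. Then log(m_i) = o(Π_{j=1}^{i} n_j/m_{j−1}) as i → ∞. -/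
/-- under the growth bounds, (G1) and (G2),
`log (m i) = o(∏_{j=1}^{i} n j / m (j-1))` as `i → ∞`. -/
theorem stmt8 (n m : ℕ → ℝ)
    (hn : ∀ i, 1 ≤ i → 0 < n i) (hm : ∀ i, 0 < m i) (hm0 : m 0 = 1)
    (hratio1 : ∀ i, 1 ≤ i → 2 ≤ n i / m (i - 1))
    (hratio2 : ∀ i, 1 ≤ i → 2 ≤ m i / n i)
    (hG1 : ∀ᶠ i in Filter.atTop,
      (∏ j ∈ Finset.Icc 1 i, n j / m (j - 1)) ≤ (∏ j ∈ Finset.Icc 1 i, m j / n j) ∧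
      (∏ j ∈ Finset.Icc 1 i, m j / n j) ≤ ∏ j ∈ Finset.Icc 1 (i + 1), n j / m (j - 1))
    (hG2 : Filter.Tendsto
      (fun i => (m (i + 1) / n (i + 1)) / ∏ j ∈ Finset.Icc 1 i, n j / m (j - 1))
      Filter.atTop (nhds 0)) :
    Filter.Tendsto
      (fun i => Real.log (m i) / ∏ j ∈ Finset.Icc 1 i, n j / m (j - 1))
      Filter.atTop (nhds 0) := by
  set P : ℕ → ℝ := fun i => ∏ j ∈ Finset.Icc 1 i, n j / m (j - 1) with hPdef
  set Q : ℕ → ℝ := fun i => ∏ j ∈ Finset.Icc 1 i, m j / n j with hQdef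
  set r : ℕ → ℝ := fun i => m i / n i with hrdef
  -- basic positivity / lower bounds
  have hr2 : ∀ i, 1 ≤ i → (2:ℝ) ≤ r i := fun i hi => hratio2 i hi
  have hrpos : ∀ i, 1 ≤ i → (0:ℝ) < r i := fun i hi => lt_of_lt_of_le two_pos (hr2 i hi)
  have h2P : ∀ i, (2:ℝ)^i ≤ P i := by
    intro i
    have : (2:ℝ)^i = ∏ j ∈ Finset.Icc 1 i, (2:ℝ) := by
      rw [Finset.prod_const, Nat.card_Icc]; norm_num
    rw [this]
    refine Finset.prod_le_prod (fun j _ => by norm_num) (fun j hj => ?_)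
    exact hratio1 j (Finset.mem_Icc.mp hj).1
  have h2Q : ∀ i, (2:ℝ)^i ≤ Q i := by
    intro i
    have : (2:ℝ)^i = ∏ j ∈ Finset.Icc 1 i, (2:ℝ) := by
      rw [Finset.prod_const, Nat.card_Icc]; norm_num
    rw [this]
    refine Finset.prod_le_prod (fun j _ => by norm_num) (fun j hj => ?_)
    exact hratio2 j (Finset.mem_Icc.mp hj).1
  have hP1 : ∀ i, (1:ℝ) ≤ P i := fun i => le_trans (one_le_pow₀ one_le_two) (h2P i)
  have hQ1 : ∀ i, (1:ℝ) ≤ Q i := fun i => le_trans (one_le_pow₀ one_le_two) (h2Q i)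
  have hPpos : ∀ i, (0:ℝ) < P i := fun i => lt_of_lt_of_le one_pos (hP1 i)
  have hQpos : ∀ i, (0:ℝ) < Q i := fun i => lt_of_lt_of_le one_pos (hQ1 i)
  -- recurrences
  have hPsucc : ∀ i, P (i + 1) = P i * (n (i+1) / m i) := by
    intro i
    have h := Finset.prod_Icc_succ_top (Nat.le_add_left 1 i) (fun j => n j / m (j - 1))
    simp only [Nat.add_sub_cancel] at h
    exact h
  have hQsucc : ∀ i, Q (i + 1) = Q i * r (i+1) := by
    intro i
    exact Finset.prod_Icc_succ_top (Nat.le_add_left 1 i) (fun j => m j / n j)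
  have hPmono : ∀ i, P i ≤ P (i+1) := by
    intro i
    rw [hPsucc i]
    have hs : (2:ℝ) ≤ n (i+1) / m i := by simpa using hratio1 (i+1) (Nat.le_add_left 1 i)
    nlinarith [hPpos i, hs]
  -- m i = P i * Q i
  have hmPQ : ∀ i, m i = P i * Q i := by
    intro i
    induction i with
    | zero => simp [hPdef, hQdef, hm0]
    | succ k ih =>
      rw [hPsucc k, hQsucc k, hrdef]
      have hmk := (hm k).ne'
      have hnk := (hn (k+1) (Nat.le_add_left 1 k)).ne'
      field_simp
      linear_combination (m (k+1)) * ih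
  -- P tends to atTop
  have hPtop : Filter.Tendsto P Filter.atTop Filter.atTop :=
    Filter.tendsto_atTop_mono h2P (tendsto_pow_atTop_atTop_of_one_lt one_lt_two)
  -- the three vanishing pieces
  have hlogP : Filter.Tendsto (fun i => Real.log (P i) / P i) Filter.atTop (nhds 0) :=
    (Real.isLittleO_log_id_atTop.tendsto_div_nhds_zero).comp hPtop
  have hrP : Filter.Tendsto (fun i => r (i+1) / P i) Filter.atTop (nhds 0) := hG2
  have hrP' : Filter.Tendsto (fun i => r i / P i) Filter.atTop (nhds 0) := by
    have hcomp : Filter.Tendsto (fun i => r ((i-1)+1) / P (i-1)) Filter.atTop (nhds 0) :=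
      hG2.comp (Filter.tendsto_sub_atTop_nat 1)
    refine squeeze_zero' ?_ ?_ hcomp
    · filter_upwards [Filter.eventually_ge_atTop 1] with i hi
      exact div_nonneg (le_of_lt (hrpos i hi)) (le_of_lt (hPpos i))
    · filter_upwards [Filter.eventually_ge_atTop 1] with i hi
      have h1 : (i - 1) + 1 = i := Nat.succ_pred_eq_of_pos hi
      rw [h1]
      have hPle : P (i-1) ≤ P i := by
        conv_rhs => rw [← h1]
        exact hPmono (i-1)
      exact div_le_div_of_nonneg_left (le_of_lt (hrpos i hi)) (hPpos (i-1)) hPle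
  -- combine into limit of upper bound
  have hup : Filter.Tendsto
      (fun i => 2 * (Real.log (P i) / P i) + r i / P i + r (i+1) / P i)
      Filter.atTop (nhds 0) := by
    have := ((hlogP.const_mul 2).add hrP').add hrP
    simpa using this
  -- squeeze
  refine squeeze_zero' ?_ ?_ hup
  · filter_upwards [Filter.eventually_ge_atTop 1] with i _
    have hm1 : (1:ℝ) ≤ m i := by
      rw [hmPQ i]; nlinarith [hP1 i, hQ1 i]
    exact div_nonneg (Real.log_nonneg hm1) (le_of_lt (hPpos i))
  · obtain ⟨N, hN⟩ := Filter.eventually_atTop.mp hG1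
    filter_upwards [Filter.eventually_ge_atTop (N+1)] with i hi
    have hi1 : 1 ≤ i := le_trans (Nat.le_add_left 1 N) hi
    have hiN : N ≤ i - 1 := Nat.le_sub_one_of_lt hi
    have h1 : (i - 1) + 1 = i := Nat.succ_pred_eq_of_pos hi1
    -- Q (i-1) ≤ P i
    have hA : Q (i-1) ≤ P i := by
      have := (hN (i-1) hiN).2
      rwa [h1] at this
    -- Q i ≤ P i * r i
    have hQle : Q i ≤ P i * r i := by
      have : Q i = Q (i-1) * r i := by
        conv_lhs => rw [← h1]
        rw [hQsucc (i-1), h1]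
      rw [this]
      exact mul_le_mul_of_nonneg_right hA (le_of_lt (hrpos i hi1))
    -- P (i+1) ≤ Q (i+1) = Q i * r (i+1) ≤ P i * r i * r (i+1)
    have hC : P (i+1) ≤ Q (i+1) := (hN (i+1) (le_trans (le_trans (Nat.le_succ N) hi) (Nat.le_succ i))).1
    have hPle : P (i+1) ≤ P i * r i * r (i+1) := by
      calc P (i+1) ≤ Q (i+1) := hC
        _ = Q i * r (i+1) := hQsucc i
        _ ≤ P i * r i * r (i+1) :=
          mul_le_mul_of_nonneg_right hQle (le_of_lt (hrpos (i+1) (Nat.le_add_left 1 i)))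
    -- Q i ≤ P (i+1)
    have hB : Q i ≤ P (i+1) := (hN i (le_trans (Nat.le_succ N) hi)).2
    -- log bound
    have hlogm : Real.log (m i) ≤ 2 * Real.log (P i) + r i + r (i+1) := by
      have e1 : Real.log (m i) = Real.log (P i) + Real.log (Q i) := by
        rw [hmPQ i, Real.log_mul (hPpos i).ne' (hQpos i).ne']
      have e2 : Real.log (Q i) ≤ Real.log (P (i+1)) :=
        Real.log_le_log (hQpos i) hB
      have e3 : Real.log (P (i+1)) ≤ Real.log (P i) + Real.log (r i) + Real.log (r (i+1)) := by
        calc Real.log (P (i+1)) ≤ Real.log (P i * r i * r (i+1)) :=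
              Real.log_le_log (hPpos (i+1)) hPle
          _ = Real.log (P i) + Real.log (r i) + Real.log (r (i+1)) := by
              rw [Real.log_mul (mul_pos (hPpos i) (hrpos i hi1)).ne'
                (hrpos (i+1) (Nat.le_add_left 1 i)).ne',
                Real.log_mul (hPpos i).ne' (hrpos i hi1).ne']
      have e4 : Real.log (r i) ≤ r i := Real.log_le_self (le_of_lt (hrpos i hi1))
      have e5 : Real.log (r (i+1)) ≤ r (i+1) :=
        Real.log_le_self (le_of_lt (hrpos (i+1) (Nat.le_add_left 1 i)))
      linarith [e1, e2, e3, e4, e5]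
    -- divide by P i
    calc Real.log (m i) / P i
        ≤ (2 * Real.log (P i) + r i + r (i+1)) / P i :=
          (div_le_div_iff_of_pos_right (hPpos i)).mpr hlogm
      _ = 2 * (Real.log (P i) / P i) + r i / P i + r (i+1) / P i := by ring
end

section
/- Let δ ∈ (0,1) and ε ∈ (0,1/2) with δ = 2ε + ε^J for some fixed J. Suppose a sequence of nonnegative row 5-vectors y^{(ℓ)} satisfies: y_1^{(ℓ)} ≤ (2ε)^{ℓ+1}, y_2^{(ℓ)} ≤ (2ε)^{ℓ+1}, y_3^{(ℓ)} ≤ δ(2ε)^ℓ, y_4^{(ℓ)} ≤ 2 + δΣ_{i=0}^{ℓ−1}(2ε)^i, y_5^{(ℓ)} ≤ (2 + δΣ_{i=0}^{ℓ−1}(2ε)^i)(1 + ε^{j+2ℓ+1}), and y^{(ℓ+1)} = y^{(ℓ)}·N_{j+2ℓ+2} where N_i is as in the paper with j ≥ J. Then the same five bounds hold for y^{(ℓ+1)} with ℓ replaced by ℓ+1. -/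
open Matrix

lemma Nc0 (r : ℕ → ℝ) (k : ℕ) (y : Fin 5 → ℝ) :
    Matrix.vecMul y (Nmat r k) 0 = y 4 * (1 / (2 * r (k + 1))) := by
  simp [Nmat, Matrix.vecMul, dotProduct, Fin.sum_univ_five, Matrix.vecHead, Matrix.vecTail]

lemma Nc1 (r : ℕ → ℝ) (k : ℕ) (y : Fin 5 → ℝ) :
    Matrix.vecMul y (Nmat r k) 1 =
      y 0 * ((2 * r k - 1) / (2 * r (k + 1))) + y 1 * (r k / r (k + 1)) := by
  simp [Nmat, Matrix.vecMul, dotProduct, Fin.sum_univ_five, Matrix.vecHead, Matrix.vecTail]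

lemma Nc2 (r : ℕ → ℝ) (k : ℕ) (y : Fin 5 → ℝ) :
    Matrix.vecMul y (Nmat r k) 2 =
      y 0 * (r k / r (k + 1)) + y 1 * ((2 * r k + 1) / (2 * r (k + 1))) := by
  simp [Nmat, Matrix.vecMul, dotProduct, Fin.sum_univ_five, Matrix.vecHead, Matrix.vecTail]

lemma Nc3 (r : ℕ → ℝ) (k : ℕ) (y : Fin 5 → ℝ) :
    Matrix.vecMul y (Nmat r k) 3 =
      y 2 * ((2 * r (k + 1) - 1) / (2 * r (k + 1))) + y 3 := by
  simp [Nmat, Matrix.vecMul, dotProduct, Fin.sum_univ_five, Matrix.vecHead, Matrix.vecTail]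

lemma Nc4 (r : ℕ → ℝ) (k : ℕ) (y : Fin 5 → ℝ) :
    Matrix.vecMul y (Nmat r k) 4 =
      y 2 + y 3 * ((2 * r (k + 1) + 1) / (2 * r (k + 1))) := by
  simp [Nmat, Matrix.vecMul, dotProduct, Fin.sum_univ_five, Matrix.vecHead, Matrix.vecTail]


set_option maxHeartbeats 1000000 in
/-- the inductive step in the proof of Proposition 4.2: if the
five bounds hold for `y = y^{(ℓ)}` and `y' = y · N_{j+2ℓ+2}`, then the same
bounds with `ℓ+1` hold for `y'`. -/
theorem stmt12 (ε : ℝ) (hε0 : 0 < ε) (hε : ε < 1 / 2)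
    (J : ℕ) (hJ : 0 < J) (δ : ℝ) (hδ : δ = 2 * ε + ε ^ J) (hδ1 : δ < 1)
    (r : ℕ → ℝ) (hrpos : ∀ i, 1 ≤ i → 0 < r i)
    (hr1 : 1 / ε ≤ r 1) (hstep : ∀ i, 1 ≤ i → r i ≤ ε * r (i + 1))
    (j ℓ : ℕ) (hj : J ≤ j)
    (y y' : Fin 5 → ℝ) (hy : ∀ s, 0 ≤ y s)
    (hrec : y' = Matrix.vecMul y (Nmat r (j + 2 * ℓ + 2)))
    (h1 : y 0 ≤ (2 * ε) ^ (ℓ + 1))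
    (h2 : y 1 ≤ (2 * ε) ^ (ℓ + 1))
    (h3 : y 2 ≤ δ * (2 * ε) ^ ℓ)
    (h4 : y 3 ≤ 2 + δ * ∑ i ∈ Finset.range ℓ, (2 * ε) ^ i)
    (h5 : y 4 ≤ (2 + δ * ∑ i ∈ Finset.range ℓ, (2 * ε) ^ i) * (1 + ε ^ (j + 2 * ℓ + 1))) :
    y' 0 ≤ (2 * ε) ^ (ℓ + 2) ∧
    y' 1 ≤ (2 * ε) ^ (ℓ + 2) ∧
    y' 2 ≤ δ * (2 * ε) ^ (ℓ + 1) ∧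
    y' 3 ≤ 2 + δ * ∑ i ∈ Finset.range (ℓ + 1), (2 * ε) ^ i ∧
    y' 4 ≤ (2 + δ * ∑ i ∈ Finset.range (ℓ + 1), (2 * ε) ^ i) *
      (1 + ε ^ (j + 2 * (ℓ + 1) + 1)) := by
  have hε1 : ε < 1 := by linarith
  have hεle1 : ε ≤ 1 := le_of_lt hε1
  set k := j + 2 * ℓ + 2 with hk
  -- lower bound on r i
  have hrlow : ∀ i, 1 ≤ i → 1 / ε ^ i ≤ r i := by
    intro i hi
    induction i with
    | zero => omega
    | succ n ih =>
      rcases Nat.lt_or_ge 1 (n + 1) with h | h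
      · have hn : 1 ≤ n := by omega
        have hs := hstep n hn
        have hrn := ih hn
        have hpow : (0:ℝ) < ε ^ n := pow_pos hε0 n
        have hrnpos : 0 < r n := hrpos n hn
        have : 1 / ε ^ (n + 1) = (1 / ε ^ n) * (1 / ε) := by
          rw [pow_succ]; ring
        rw [this]
        have h1ε : (0:ℝ) < 1/ε := by positivity
        calc (1 / ε ^ n) * (1/ε) ≤ r n * (1/ε) := by
              apply mul_le_mul_of_nonneg_right hrn (le_of_lt h1ε)
          _ ≤ r (n + 1) := by
              have ha := mul_le_mul_of_nonneg_right hs (le_of_lt h1ε)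
              have hb : ε * r (n + 1) * (1/ε) = r (n + 1) := by field_simp
              linarith only [ha, hb]
      · have : n = 0 := by omega
        subst this
        simpa using hr1
  have hk1 : 1 ≤ k := by omega
  have hRpos : 0 < r (k + 1) := hrpos (k + 1) (by omega)
  have hrkpos : 0 < r k := hrpos k hk1
  have hratio : r k ≤ ε * r (k + 1) := hstep k hk1
  have hrk2 : 2 ≤ r k := by
    have := hrlow k hk1
    have hp : ε ^ k ≤ ε := by
      calc ε ^ k ≤ ε ^ 1 := pow_le_pow_of_le_one (le_of_lt hε0) hεle1 hk1
        _ = ε := pow_one ε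
    have h1e : 1 / ε ≤ r k := le_trans (by
      apply one_div_le_one_div_of_le (pow_pos hε0 k) hp) this
    have hinv1 : ε * (1/ε) = 1 := by field_simp
    nlinarith only [mul_le_mul_of_nonneg_left h1e (le_of_lt hε0), hinv1, hrkpos, hε]
  have hRlow : 1 / ε ^ (k + 1) ≤ r (k + 1) := hrlow (k + 1) (by omega)
  -- inverse bound
  have hinv : 1 / (2 * r (k + 1)) ≤ ε ^ (k + 1) / 2 := by
    rw [div_le_div_iff₀ (by positivity) (by norm_num)]
    have hp : (0:ℝ) < ε ^ (k + 1) := pow_pos hε0 _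
    rw [div_le_iff₀ hp] at hRlow
    nlinarith only [hRlow, hp, hRpos]
  have hinvpos : 0 ≤ 1 / (2 * r (k + 1)) := by positivity
  -- ratio bounds
  have hrat : r k / r (k + 1) ≤ ε := by
    rw [div_le_iff₀ hRpos]; linarith only [hratio]
  have hratpos : 0 ≤ r k / r (k + 1) := by positivity
  -- entries
  have hc1 : (2 * r k - 1) / (2 * r (k + 1)) ≤ ε := by
    rw [div_le_iff₀ (by positivity)]
    nlinarith only [hratio, hRpos]
  have hc1pos : 0 ≤ (2 * r k - 1) / (2 * r (k + 1)) := by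
    apply div_nonneg (by linarith) (by linarith)
  have hc2 : (2 * r k + 1) / (2 * r (k + 1)) ≤ ε + ε ^ (k + 1) / 2 := by
    have : (2 * r k + 1) / (2 * r (k + 1)) = r k / r (k + 1) + 1 / (2 * r (k + 1)) := by
      field_simp
    rw [this]; linarith only [hrat, hinv]
  have hc2pos : 0 ≤ (2 * r k + 1) / (2 * r (k + 1)) := by positivity
  have hc3 : (2 * r (k + 1) - 1) / (2 * r (k + 1)) ≤ 1 := by
    rw [div_le_one (by positivity)]; linarith only [hRpos]
  have hR2 : 2 ≤ r (k + 1) := by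
    linarith only [hratio, hrk2, mul_pos (show (0:ℝ) < 1 - ε by linarith) hRpos, hε, hε0]
  have hc3pos : 0 ≤ (2 * r (k + 1) - 1) / (2 * r (k + 1)) := by
    apply div_nonneg (by linarith) (by linarith)
  have hc4 : (2 * r (k + 1) + 1) / (2 * r (k + 1)) ≤ 1 + ε ^ (k + 1) / 2 := by
    have : (2 * r (k + 1) + 1) / (2 * r (k + 1)) = 1 + 1 / (2 * r (k + 1)) := by
      field_simp
    rw [this]; linarith only [hinv]
  have hc4pos : 0 ≤ (2 * r (k + 1) + 1) / (2 * r (k + 1)) := by positivity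
  -- component formulas
  have e0 : y' 0 = y 4 * (1 / (2 * r (k + 1))) := by
    rw [hrec]; exact Nc0 r k y
  have e1 : y' 1 = y 0 * ((2 * r k - 1) / (2 * r (k + 1))) + y 1 * (r k / r (k + 1)) := by
    rw [hrec]; exact Nc1 r k y
  have e2 : y' 2 = y 0 * (r k / r (k + 1)) + y 1 * ((2 * r k + 1) / (2 * r (k + 1))) := by
    rw [hrec]; exact Nc2 r k y
  have e3 : y' 3 = y 2 * ((2 * r (k + 1) - 1) / (2 * r (k + 1))) + y 3 := by
    rw [hrec]; exact Nc3 r k y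
  have e4 : y' 4 = y 2 + y 3 * ((2 * r (k + 1) + 1) / (2 * r (k + 1))) := by
    rw [hrec]; exact Nc4 r k y
  set S := ∑ i ∈ Finset.range ℓ, (2 * ε) ^ i with hS
  have hS0 : 0 ≤ S := Finset.sum_nonneg fun i _ => by positivity
  have hA0 : (0:ℝ) ≤ (2*ε)^ℓ := by positivity
  have hA10 : (0:ℝ) ≤ (2*ε)^(ℓ+1) := by positivity
  have hSsucc : ∑ i ∈ Finset.range (ℓ + 1), (2 * ε) ^ i = S + (2 * ε) ^ ℓ := by
    rw [Finset.sum_range_succ]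
  have hδ0 : 0 ≤ δ := by rw [hδ]; positivity
  -- geometric sum bound
  have hSle : S * (1 - 2 * ε) ≤ 1 := by
    have h2ε : (2:ℝ) * ε ≠ 1 := by intro h; linarith
    have hgeom : S = ((2*ε)^ℓ - 1) / (2*ε - 1) := geom_sum_eq h2ε ℓ
    have hne : 2*ε - 1 ≠ 0 := sub_ne_zero.mpr (by intro h; linarith)
    have hkey2 : S * (2*ε - 1) = (2*ε)^ℓ - 1 := by
      rw [hgeom]; field_simp
    linarith only [hkey2, hA0]
  have hejJ : ε ^ j ≤ ε ^ J := pow_le_pow_of_le_one (le_of_lt hε0) hεle1 hj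
  have heJ : ε ^ J ≤ 1 - 2 * ε := by rw [hδ] at hδ1; linarith
  have hej : ε ^ j ≤ 1 - 2 * ε := le_trans hejJ heJ
  have hej0 : (0:ℝ) ≤ ε ^ j := by positivity
  -- e := ε^(j+2ℓ+1); ε^(k+1) = e * ε^2
  have hkey : ε ^ (k + 1) = ε ^ (j + 2*ℓ + 1) * ε ^ 2 := by
    rw [← pow_add]
  have hEpos : (0:ℝ) ≤ ε ^ (j + 2*ℓ + 1) := by positivity
  have hE1 : ε ^ (j + 2*ℓ + 1) ≤ ε ^ (2*ℓ + 2) := by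
    apply pow_le_pow_of_le_one (le_of_lt hε0) hεle1; omega
  have hE1' : ε ^ (j + 2*ℓ + 1) ≤ 1 := by
    apply pow_le_one₀ (le_of_lt hε0) hεle1
  -- key product bound: δ * S * ε^(j+2ℓ+1) ≤ ε^(2ℓ+1)
  have hprod : δ * S * ε ^ (j + 2*ℓ + 1) ≤ ε ^ (2*ℓ + 1) := by
    have h1 : ε ^ (j + 2*ℓ + 1) = ε ^ j * ε ^ (2*ℓ + 1) := by rw [← pow_add, Nat.add_assoc]
    have h2 : S * ε ^ j ≤ 1 := by
      calc S * ε ^ j ≤ S * (1 - 2*ε) := by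
            apply mul_le_mul_of_nonneg_left hej hS0
        _ ≤ 1 := hSle
    have hpp : (0:ℝ) ≤ ε ^ (2*ℓ+1) := by positivity
    calc δ * S * ε ^ (j + 2*ℓ + 1) = δ * (S * ε ^ j) * ε ^ (2*ℓ+1) := by rw [h1]; ring
      _ ≤ 1 * 1 * ε ^ (2*ℓ+1) := by
          apply mul_le_mul_of_nonneg_right _ hpp
          nlinarith only [h2, hδ0, mul_nonneg hS0 hej0, le_of_lt hδ1]
      _ = ε ^ (2*ℓ+1) := by ring
  have hε2ℓ : ε ^ (2*ℓ) ≤ (2*ε) ^ ℓ := by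
    have : ε ^ (2*ℓ) = (ε^2) ^ ℓ := by rw [← pow_mul]
    rw [this]
    apply pow_le_pow_left₀ (by positivity)
    nlinarith only [mul_pos hε0 (show (0:ℝ) < 2 - ε by linarith)]
  refine ⟨?_, ?_, ?_, ?_, ?_⟩
  · -- y' 0
    rw [e0]
    have hy4 : 0 ≤ y 4 := hy 4
    have step1 : y 4 * (1 / (2 * r (k+1))) ≤ ((2 + δ*S) * (1 + ε ^ (j+2*ℓ+1))) * (ε^(k+1)/2) := by
      have hnn0 : (0:ℝ) ≤ (2 + δ*S) * (1 + ε ^ (j+2*ℓ+1)) :=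
        mul_nonneg (by linarith only [mul_nonneg hδ0 hS0]) (by linarith only [hEpos])
      exact mul_le_mul h5 hinv hinvpos hnn0
    refine le_trans step1 ?_
    rw [hkey]
    set E := ε ^ (j + 2*ℓ + 1) with hE
    -- (2 + δS)(1+E) * E ε²/2 ≤ (2ε)^(ℓ+2)
    have hQ : (2 + δ*S) * E ≤ 2 * ε^(2*ℓ+1) := by
      have : (2 + δ*S) * E = 2*E + δ*S*E := by ring
      rw [this]
      have h2E : 2*E ≤ 2*ε^(2*ℓ+2) := by linarith
      have hεp : ε^(2*ℓ+2) = ε * ε^(2*ℓ+1) := by rw [← pow_succ']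
      nlinarith only [hprod, h2E, hεp,
        mul_pos (pow_pos hε0 (2*ℓ+1)) (show (0:ℝ) < 1 - 2*ε by linarith)]
    have goal2 : (2 + δ*S) * (1 + E) * (E * ε^2 / 2) ≤ (2*ε)^(ℓ+2) := by
      have hfin : (2 + δ*S) * (1 + E) * (E * ε^2 / 2) = ((2+δ*S)*E) * (1+E) * (ε^2/2) := by ring
      rw [hfin]
      have st : ((2+δ*S)*E) * (1+E) * (ε^2/2) ≤ (2*ε^(2*ℓ+1)) * 2 * (ε^2/2) := by
        have h1E : 1 + E ≤ 2 := by linarith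
        have : ((2+δ*S)*E) * (1+E) ≤ (2*ε^(2*ℓ+1)) * 2 := by
          apply mul_le_mul hQ h1E (by linarith only [hEpos]) (by positivity)
        exact mul_le_mul_of_nonneg_right this (by positivity)
      refine le_trans st ?_
      have expand : (2*ε)^(ℓ+2) = 4 * ε^2 * (2*ε)^ℓ := by ring
      rw [expand]
      have heq : (2*ε^(2*ℓ+1)) * 2 * (ε^2/2) = (2*ε*ε^2) * ε^(2*ℓ) := by
        rw [pow_succ]; ring
      rw [heq]
      calc (2*ε*ε^2) * ε^(2*ℓ) ≤ (2*ε*ε^2) * (2*ε)^ℓ := by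
            apply mul_le_mul_of_nonneg_left hε2ℓ (by positivity)
        _ ≤ (4*ε^2) * (2*ε)^ℓ := by
            apply mul_le_mul_of_nonneg_right _ hA0
            nlinarith only [hε0, hε1, sq_nonneg ε]
        _ = 4 * ε^2 * (2*ε)^ℓ := by ring
    exact goal2
  · -- y' 1
    rw [e1]
    have t1 : y 0 * ((2 * r k - 1) / (2 * r (k+1))) ≤ (2*ε)^(ℓ+1) * ε :=
      mul_le_mul h1 hc1 hc1pos hA10
    have t2 : y 1 * (r k / r (k+1)) ≤ (2*ε)^(ℓ+1) * ε :=
      mul_le_mul h2 hrat hratpos hA10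
    have : (2*ε)^(ℓ+2) = (2*ε)^(ℓ+1) * ε + (2*ε)^(ℓ+1) * ε := by ring
    rw [this]; linarith only [t1, t2]
  · -- y' 2
    rw [e2]
    have t1 : y 0 * (r k / r (k+1)) ≤ (2*ε)^(ℓ+1) * ε :=
      mul_le_mul h1 hrat hratpos hA10
    have t2 : y 1 * ((2 * r k + 1) / (2 * r (k+1))) ≤ (2*ε)^(ℓ+1) * (ε + ε^(k+1)/2) :=
      mul_le_mul h2 hc2 hc2pos hA10
    have hεk1 : ε^(k+1) ≤ ε^J := by
      apply pow_le_pow_of_le_one (le_of_lt hε0) hεle1; omega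
    have target : δ * (2*ε)^(ℓ+1) = (2*ε)^(ℓ+1) * (2*ε + ε^J) := by rw [hδ]; ring
    rw [target]
    linarith only [t1, t2, mul_le_mul_of_nonneg_left hεk1 hA10,
      mul_nonneg hA10 (pow_nonneg (le_of_lt hε0) J)]
  · -- y' 3
    rw [e3, hSsucc]
    have t1 : y 2 * ((2 * r (k+1) - 1) / (2 * r (k+1))) ≤ δ * (2*ε)^ℓ := by
      calc y 2 * ((2 * r (k+1) - 1) / (2 * r (k+1))) ≤ y 2 * 1 :=
            mul_le_mul_of_nonneg_left hc3 (hy 2)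
        _ = y 2 := mul_one _
        _ ≤ δ * (2*ε)^ℓ := h3
    have : 2 + δ * (S + (2*ε)^ℓ) = δ * (2*ε)^ℓ + (2 + δ*S) := by ring
    rw [this]; linarith only [t1, h4]
  · -- y' 4
    rw [e4, hSsucc]
    have hkk : j + 2*(ℓ+1) + 1 = k + 1 := by omega
    rw [hkk]
    have t2 : y 3 * ((2 * r (k+1) + 1) / (2 * r (k+1))) ≤
        (2 + δ*S) * (1 + ε^(k+1)/2) := by
      apply mul_le_mul h4 hc4 hc4pos
      nlinarith [mul_nonneg hδ0 hS0]
    have hεk0 : (0:ℝ) ≤ ε^(k+1) := by positivity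
    have hδS : 0 ≤ δ * S := mul_nonneg hδ0 hS0
    have hδA : 0 ≤ δ * (2*ε)^ℓ := mul_nonneg hδ0 hA0
    linarith only [h3, t2, hεk0, hδS, hδA, mul_nonneg hδA hεk0, mul_nonneg hδS hεk0]
end
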